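/- Any compact subgroup K of a connected nilpotent Lie group N is contained in the center of N. -/

import Mathlib

/-!
In a chart `φ` at `1`, multiplication is `C¹` and `φ (g * h) - φ g` is close to `φ h - φ 1` for `g`,
`h` near `1`. So the powers of an `h ≠ 1` near `1` drift linearly away from `φ 1` and leave every
small ball: a Lie group has no small subgroups.

Let `K` be compact and suppose `⁅x, K⁆` commutes with `K`. Then `k ↦ ⁅x, k⁆` is a homomorphism on
`K`, and for `x` near `1` its image is a small subgroup, hence trivial, so `x` centralizes `K`.
The terms of the lower central series are connected, hence generated by any neighbourhood of `1`
in them; going down the series from the trivial term shows that every term centralizes `K`, the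
first one, `G`, included.
-/

open Set Filter Topology Metric Manifold ContDiff
open scoped commutatorElement

theorem HasStrictFDerivAt.eventually_norm_sub_sub_le_half {𝕜 E : Type*}
    [NontriviallyNormedField 𝕜] [NormedAddCommGroup E] [NormedSpace 𝕜 E]
    {F : E × E → E} {L : E × E →L[𝕜] E} {a : E} (hF : HasStrictFDerivAt F L (a, a))
    (hright : ∀ᶠ x in 𝓝 a, F (x, a) = x) (hleft : ∀ᶠ y in 𝓝 a, F (a, y) = y) :
    ∀ᶠ p in 𝓝 (a, a), ‖F p - p.1 - (p.2 - a)‖ ≤ ‖p.2 - a‖ / 2 := by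
  have hL : L.comp (ContinuousLinearMap.inr 𝕜 E E) = ContinuousLinearMap.id 𝕜 E :=
    (hF.hasFDerivAt.comp a (hasFDerivAt_prodMk_right a a)).unique
      ((hasFDerivAt_id a).congr_of_eventuallyEq hleft)
  obtain ⟨s, hs, hlip⟩ := (hF.sub L.hasStrictFDerivAt).exists_lipschitzOnWith_of_nnnorm_lt
    (1 / 2) (by simp)
  have hpair : Tendsto (fun p : E × E => (p.1, a)) (𝓝 (a, a)) (𝓝 (a, a)) :=
    (continuous_fst.prodMk continuous_const).tendsto' _ _ rfl
  filter_upwards [hs, hpair.eventually_mem hs, continuous_fst.tendsto (a, a) |>.eventually hright]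
    with ⟨x, y⟩ hxy hxa hFx
  have hdist : dist (x, y) (x, a) = ‖y - a‖ := by simp [dist_eq_norm]
  have hsplit : F (x, y) - x - (y - a) = (F - L) (x, y) - (F - L) (x, a) := by
    have hLxy : L (x, y) - L (x, a) = y - a := by
      rw [← map_sub, Prod.mk_sub_mk, sub_self]
      exact DFunLike.congr_fun hL (y - a)
    simp only [Pi.sub_apply, hFx]
    rw [← hLxy]; abel
  have := hlip.dist_le_mul _ hxy _ hxa
  rw [dist_eq_norm, hdist, ← hsplit] at this
  simpa [div_eq_inv_mul] using this

theorem eq_zero_of_forall_norm_sub_sub_le_half {E : Type*} [NormedAddCommGroup E]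
    [NormedSpace ℝ E] {x : ℕ → E} {u : E} {r : ℝ}
    (hstep : ∀ m, ‖x (m + 1) - x m - u‖ ≤ ‖u‖ / 2) (hbdd : ∀ m, ‖x m - x 0‖ ≤ r) : u = 0 := by
  have hdrift : ∀ m : ℕ, ‖x m - x 0 - (m : ℝ) • u‖ ≤ m * (‖u‖ / 2) := by
    intro m
    induction m with
    | zero => simp
    | succ m ih =>
      calc ‖x (m + 1) - x 0 - ((m + 1 : ℕ) : ℝ) • u‖
          = ‖(x (m + 1) - x m - u) + (x m - x 0 - (m : ℝ) • u)‖ := by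
            congr 1; push_cast; module
        _ ≤ ‖u‖ / 2 + m * (‖u‖ / 2) := (norm_add_le _ _).trans (add_le_add (hstep m) ih)
        _ = (m + 1 : ℕ) * (‖u‖ / 2) := by push_cast; ring
  have hgrowth : ∀ m : ℕ, m • (‖u‖ / 2) ≤ r := by
    intro m
    have := norm_sub_norm_le ((m : ℝ) • u) (x m - x 0)
    rw [norm_smul, Real.norm_natCast, norm_sub_rev ((m : ℝ) • u)] at this
    rw [nsmul_eq_mul]
    linarith [hdrift m, hbdd m]
  by_contra hu
  obtain ⟨m, hm⟩ := exists_lt_nsmul (half_pos (norm_pos_iff.mpr hu)) r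
  exact (hm.trans_le (hgrowth m)).false

def HasNoSmallSubgroups (G : Type*) [Group G] [TopologicalSpace G] : Prop :=
  ∃ U ∈ 𝓝 (1 : G), ∀ H : Subgroup G, (H : Set G) ⊆ U → H = ⊥

theorem contDiffAt_extChartAt_mul {E : Type*} [NormedAddCommGroup E] [NormedSpace ℝ E]
    {G : Type*} [TopologicalSpace G] [ChartedSpace E G] [Group G] (n : ℕ∞ω)
    [ContMDiffMul 𝓘(ℝ, E) n G] :
    ContDiffAt ℝ n (fun p : E × E => extChartAt 𝓘(ℝ, E) (1 : G)
      ((extChartAt 𝓘(ℝ, E) 1).symm p.1 * (extChartAt 𝓘(ℝ, E) 1).symm p.2))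
      (extChartAt 𝓘(ℝ, E) (1 : G) 1, extChartAt 𝓘(ℝ, E) (1 : G) 1) := by
  have h := (contMDiffAt_iff.mp ((contMDiff_mul 𝓘(ℝ, E) n).contMDiffAt
    (x := ((1 : G), (1 : G))))).2
  rw [ModelWithCorners.range_eq_univ, contDiffWithinAt_univ] at h
  simpa only [Function.comp_def, extChartAt_prod, PartialEquiv.prod_symm,
    PartialEquiv.prod_coe_symm, PartialEquiv.prod_coe, mul_one] using h

theorem hasNoSmallSubgroups_of_contMDiffMul (E : Type*) [NormedAddCommGroup E] [NormedSpace ℝ E]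
    {G : Type*} [TopologicalSpace G] [ChartedSpace E G] [Group G] {n : ℕ∞ω}
    [ContMDiffMul 𝓘(ℝ, E) n G] (hn : n ≠ 0) : HasNoSmallSubgroups G := by
  set φ := extChartAt 𝓘(ℝ, E) (1 : G)
  set a := φ 1
  have h1 : (1 : G) ∈ φ.source := mem_extChartAt_source 1
  have hsymm : φ.symm a = 1 := φ.left_inv h1
  have hF : HasStrictFDerivAt (fun p : E × E => φ (φ.symm p.1 * φ.symm p.2))
      (fderiv ℝ _ (a, a)) (a, a) := (contDiffAt_extChartAt_mul n).hasStrictFDerivAt hn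
  have hright : ∀ᶠ x in 𝓝 a, φ (φ.symm x * φ.symm a) = x := by
    filter_upwards [extChartAt_target_mem_nhds (1 : G)] with x hx
    simp [hsymm, φ.right_inv hx]
  have hleft : ∀ᶠ y in 𝓝 a, φ (φ.symm a * φ.symm y) = y := by
    filter_upwards [extChartAt_target_mem_nhds (1 : G)] with y hy
    simp [hsymm, φ.right_inv hy]
  obtain ⟨r, hr, hball⟩ := Metric.eventually_nhds_iff_ball.mp
    (hF.eventually_norm_sub_sub_le_half hright hleft)
  refine ⟨φ.source ∩ φ ⁻¹' ball a r, inter_mem (extChartAt_source_mem_nhds 1)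
    ((continuousAt_extChartAt 1).preimage_mem_nhds (ball_mem_nhds a hr)), fun H hH => ?_⟩
  refine eq_bot_iff.mpr fun h hh => ?_
  have hpow : ∀ m : ℕ, h ^ m ∈ φ.source ∧ φ (h ^ m) ∈ ball a r := fun m => hH (pow_mem hh m)
  have hh : h ∈ φ.source ∧ φ h ∈ ball a r := pow_one h ▸ hpow 1
  have hstep : ∀ m : ℕ, ‖φ (h ^ (m + 1)) - φ (h ^ m) - (φ h - a)‖ ≤ ‖φ h - a‖ / 2 := by
    intro m
    have := hball (φ (h ^ m), φ h) (by rw [← ball_prod_same]; exact ⟨(hpow m).2, hh.2⟩)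
    rw [pow_succ]
    simpa only [φ.left_inv (hpow m).1, φ.left_inv hh.1] using this
  have hfix := eq_zero_of_forall_norm_sub_sub_le_half (x := fun m => φ (h ^ m)) hstep
    (fun m => by simpa only [pow_zero] using (mem_ball_iff_norm.mp (hpow m).2).le)
  exact φ.injOn hh.1 h1 (sub_eq_zero.mp hfix)

namespace Subgroup

variable {G : Type*} [Group G] [TopologicalSpace G] [IsTopologicalGroup G]

theorem isPreconnected_closure {S : Set G} (hS : IsPreconnected S) (h1 : (1 : G) ∈ S) :
    IsPreconnected (closure S : Set G) := by
  have hS' : IsPreconnected ((↑) ⁻¹' S : Set (closure S)) := by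
    refine (Topology.IsEmbedding.subtypeVal (p := (· ∈ closure S))).isInducing
      |>.isPreconnected_image.mp ?_
    rwa [image_preimage_eq_of_subset (by simp)]
  have hcomp : (⊤ : Subgroup (closure S)) ≤ connectedComponentOfOne (closure S) := by
    rw [← closure_closure_coe_preimage, closure_le]
    exact hS'.subset_connectedComponent (x := 1) h1
  have huniv : connectedComponent (1 : closure S) = univ :=
    eq_univ_of_forall fun h => hcomp (mem_top h)
  have := (isPreconnected_connectedComponent (x := (1 : closure S))).image _
    continuous_subtype_val.continuousOn
  rwa [huniv, image_univ, Subtype.range_coe] at this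

theorem isPreconnected_commutator {H₁ H₂ : Subgroup G} (h₁ : IsPreconnected (H₁ : Set G))
    (h₂ : IsPreconnected (H₂ : Set G)) : IsPreconnected ((⁅H₁, H₂⁆ : Subgroup G) : Set G) := by
  rw [commutator_def]
  refine isPreconnected_closure ?_ ⟨1, one_mem H₁, 1, one_mem H₂, commutatorElement_one_left 1⟩
  change IsPreconnected (image2 (fun a b : G => ⁅a, b⁆) (H₁ : Set G) (H₂ : Set G))
  rw [← image_prod]
  exact (h₁.prod h₂).image _ (by simp only [commutatorElement_def]; fun_prop)

theorem isPreconnected_lowerCentralSeries [ConnectedSpace G] (n : ℕ) :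
    IsPreconnected ((⊤ : Subgroup G).lowerCentralSeries n : Set G) := by
  induction n with
  | zero => simpa using isPreconnected_univ
  | succ n ih => exact isPreconnected_commutator ih (by simpa using isPreconnected_univ)

theorem le_closure_inter_of_isPreconnected {H : Subgroup G} (hH : IsPreconnected (H : Set G))
    {V : Set G} (hV : V ∈ 𝓝 1) : H ≤ closure ((H : Set G) ∩ V) := by
  have : PreconnectedSpace H := isPreconnected_iff_preconnectedSpace.mp hH
  set L : Subgroup H := closure (H.subtype ⁻¹' ((H : Set G) ∩ V))
  have hL : (L : Set H) ∈ 𝓝 1 := by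
    refine mem_of_superset (inter_mem (univ_mem' fun h => h.2) ?_) subset_closure
    exact (continuous_subtype_val.continuousAt (x := (1 : H))).preimage_mem_nhds hV
  have hopen := L.isOpen_of_mem_nhds hL
  have htop : L = ⊤ := by
    rw [← coe_eq_univ]
    exact IsClopen.eq_univ ⟨L.isClosed_of_isOpen hopen, hopen⟩ ⟨1, one_mem L⟩
  intro h hh
  exact MonoidHom.closure_preimage_le H.subtype _ (htop ▸ mem_top (⟨h, hh⟩ : H))

end Subgroup

section Commutator

variable {G : Type*} [Group G]

theorem commutatorElement_mul_right_of_commute {x a b : G} (h : Commute a ⁅x, b⁆) :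
    ⁅x, a * b⁆ = ⁅x, a⁆ * ⁅x, b⁆ :=
  calc ⁅x, a * b⁆ = x * a * x⁻¹ * (⁅x, b⁆ * a⁻¹) := by simp only [commutatorElement_def]; group
    _ = x * a * x⁻¹ * (a⁻¹ * ⁅x, b⁆) := by rw [h.inv_left.eq]
    _ = ⁅x, a⁆ * ⁅x, b⁆ := by simp only [commutatorElement_def]; group

def commutatorHom (x : G) (K : Subgroup G) (hx : ∀ k ∈ K, ⁅x, k⁆ ∈ Subgroup.centralizer K) :
    K →* G where
  toFun k := ⁅x, (k : G)⁆
  map_one' := commutatorElement_one_right x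
  map_mul' k k' := commutatorElement_mul_right_of_commute
    (Subgroup.mem_centralizer_iff.mp (hx k' k'.2) k k.2)

theorem IsCompact.eventually_forall_commutator_mem [TopologicalSpace G] [IsTopologicalGroup G]
    {K : Set G} (hK : IsCompact K) {U : Set G} (hU : U ∈ 𝓝 1) :
    ∀ᶠ x in 𝓝 (1 : G), ∀ k ∈ K, ⁅x, k⁆ ∈ U := by
  refine hK.eventually_forall_of_forall_eventually fun k _ => ?_
  have hcont : Continuous fun p : G × G => ⁅p.1, p.2⁆ := by
    simp only [commutatorElement_def]; fun_prop
  exact hcont.continuousAt.preimage_mem_nhds (by simpa using hU)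

end Commutator

namespace HasNoSmallSubgroups

variable {G : Type*} [Group G] [TopologicalSpace G] [IsTopologicalGroup G] {K : Subgroup G}

theorem le_centralizer_of_commutator_le (hG : HasNoSmallSubgroups G) (hK : IsCompact (K : Set G))
    {H : Subgroup G} (hH : IsPreconnected (H : Set G)) (hHK : ⁅H, K⁆ ≤ Subgroup.centralizer K) :
    H ≤ Subgroup.centralizer K := by
  obtain ⟨U, hU, hsmall⟩ := hG
  obtain ⟨V, hV, hVU⟩ := (hK.eventually_forall_commutator_mem hU).exists_mem
  refine (Subgroup.le_closure_inter_of_isPreconnected hH hV).trans ((Subgroup.closure_le _).mpr ?_)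
  rintro x ⟨hxH, hxV⟩
  have hx : ∀ k ∈ K, ⁅x, k⁆ ∈ Subgroup.centralizer K := fun k hk =>
    hHK (Subgroup.commutator_mem_commutator hxH hk)
  have htriv : commutatorHom x K hx = 1 := MonoidHom.range_eq_bot_iff.mp <|
    hsmall _ <| by rintro _ ⟨k, rfl⟩; exact hVU x hxV k k.2
  refine Subgroup.mem_centralizer_iff.mpr fun k hk => ?_
  have : ⁅x, k⁆ = 1 := DFunLike.congr_fun htriv ⟨k, hk⟩
  exact (commutatorElement_eq_one_iff_commute.mp this).eq.symm

theorem le_center [ConnectedSpace G] [Group.IsNilpotent G] (hG : HasNoSmallSubgroups G)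
    (hK : IsCompact (K : Set G)) : K ≤ Subgroup.center G := by
  obtain ⟨n, hn⟩ := Subgroup.nilpotent_iff_lowerCentralSeries.mp ‹_›
  have hlcs : ∀ j ≤ n, (⊤ : Subgroup G).lowerCentralSeries j ≤ Subgroup.centralizer K := by
    intro j hj
    induction hj using Nat.decreasingInduction with
    | self => simp [hn]
    | of_succ j _ ih =>
      exact hG.le_centralizer_of_commutator_le hK (Subgroup.isPreconnected_lowerCentralSeries j)
        ((Subgroup.commutator_mono le_rfl le_top).trans ih)
  rw [← SetLike.coe_subset_coe, ← Subgroup.centralizer_eq_top_iff_subset, eq_top_iff]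
  exact hlcs 0 n.zero_le

end HasNoSmallSubgroups

theorem stmt1_general {E : Type*} [NormedAddCommGroup E] [NormedSpace ℝ E]
    {G : Type*} [TopologicalSpace G] [ChartedSpace E G] [Group G]
    [LieGroup (modelWithCornersSelf ℝ E) (⊤ : ℕ∞) G] [ConnectedSpace G] [Group.IsNilpotent G]
    (K : Subgroup G) (hK : IsCompact (K : Set G)) :
    K ≤ Subgroup.center G := by
  have : IsTopologicalGroup G := topologicalGroup_of_lieGroup 𝓘(ℝ, E) (⊤ : ℕ∞)
  exact (hasNoSmallSubgroups_of_contMDiffMul E (n := (⊤ : ℕ∞)) (by simp)).le_center hK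

/-- Any compact subgroup of a connected nilpotent Lie group is central. -/
theorem stmt1 {E : Type*} [NormedAddCommGroup E] [NormedSpace ℝ E] [FiniteDimensional ℝ E]
    {G : Type*} [TopologicalSpace G] [ChartedSpace E G] [Group G]
    [LieGroup (modelWithCornersSelf ℝ E) (⊤ : ℕ∞) G] [ConnectedSpace G] [Group.IsNilpotent G]
    (K : Subgroup G) (hK : IsCompact (K : Set G)) :
    K ≤ Subgroup.center G :=
  stmt1_general (E := E) K hK
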